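/- arXiv:0811.0192 — 7 statements merged into one kernel-verified Lean document; each statement's English description precedes it below -/
import Mathlib

section
/- Let Γ be a subgroup of Homeo₊(S¹). If Γ has a finite orbit, then the image ρ(Γ) of Γ under the rotation number function is a finite subset of ℝ/ℤ. -/
/-!
Every `γ ∈ Γ` permutes a finite orbit `O ∋ x`, so `γ ^ N` fixes `x` for the uniform exponent
`N = |Sym(O)|`. If `F` lifts `γ`, then `F ^ N` moves a lift of `x` by an integer `m`, whence
`N • τ(F) = τ(F ^ N) = m` and `N • ρ(γ) = 0`. The `N`-torsion of `ℝ/ℤ` is finite.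
-/

open Filter Topology Set MeasureTheory Classical

noncomputable section

/-- The circle `S¹ = ℝ/ℤ`. -/
abbrev S1 := AddCircle (1 : ℝ)

/-- The group of homeomorphisms of the circle (composition as multiplication). -/
instance : Group (S1 ≃ₜ S1) where
  mul f g := g.trans f
  one := Homeomorph.refl _
  inv := Homeomorph.symm
  mul_assoc f g h := rfl
  one_mul f := Homeomorph.ext fun _ => rfl
  mul_one f := Homeomorph.ext fun _ => rfl
  inv_mul_cancel f := Homeomorph.ext fun x => f.symm_apply_apply x

/-- `F` is a lift of the circle map `f` to the real line. -/
def IsLiftOf (F : CircleDeg1Lift) (f : S1 ≃ₜ S1) : Prop :=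
  ∀ x : ℝ, f (x : S1) = ((F x : ℝ) : S1)

/-- `f` is an orientation-preserving homeomorphism of the circle: it admits a lift to
a monotone homeomorphism of `ℝ` commuting with integer translations. -/
def OrientationPreserving (f : S1 ≃ₜ S1) : Prop :=
  ∃ F : CircleDeg1Liftˣ, IsLiftOf (F : CircleDeg1Lift) f

/-- The rotation number `ρ(f) ∈ ℝ/ℤ` of an orientation-preserving circle homeomorphism:
the translation number of a lift, taken modulo `ℤ` (independent of the lift). -/
def rotationNumber (f : S1 ≃ₜ S1) : AddCircle (1 : ℝ) :=
  if h : ∃ F : CircleDeg1Liftˣ, IsLiftOf (F : CircleDeg1Lift) f then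
    (((h.choose : CircleDeg1Lift).translationNumber : ℝ) : AddCircle (1 : ℝ))
  else 0

/-- The orbit of `x` under a subgroup `Γ` of circle homeomorphisms. -/
def circleOrbit (Γ : Subgroup (S1 ≃ₜ S1)) (x : S1) : Set S1 :=
  {y : S1 | ∃ γ ∈ Γ, γ x = y}

/-- `Γ` has a finite orbit. -/
def HasFiniteOrbit (Γ : Subgroup (S1 ≃ₜ S1)) : Prop :=
  ∃ x : S1, (circleOrbit Γ x).Finite

/-- `f` is an orientation-preserving real analytic diffeomorphism of the circle: it has a
lift which is a real analytic map `ℝ → ℝ` with everywhere positive derivative. -/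
def IsAnalyticDiffeo (f : S1 ≃ₜ S1) : Prop :=
  ∃ F : CircleDeg1Liftˣ, IsLiftOf (F : CircleDeg1Lift) f ∧
    AnalyticOnNhd ℝ (⇑(F : CircleDeg1Lift)) Set.univ ∧
    ∀ x : ℝ, 0 < deriv (⇑(F : CircleDeg1Lift)) x

/-- `Γ` is nondiscrete with respect to the `C¹`-topology: there is a sequence of elements of
`Γ ∖ {id}` converging to the identity in the `C¹`-topology (expressed via lifts). -/
def C1Nondiscrete (Γ : Subgroup (S1 ≃ₜ S1)) : Prop :=
  ∃ (f : ℕ → S1 ≃ₜ S1) (F : ℕ → CircleDeg1Liftˣ),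
    (∀ n, f n ∈ Γ ∧ f n ≠ 1 ∧ IsLiftOf (F n : CircleDeg1Lift) (f n)) ∧
    ∀ ε : ℝ, 0 < ε → ∃ N : ℕ, ∀ n ≥ N, ∀ x : ℝ,
      |(F n : CircleDeg1Lift) x - x| < ε ∧ |deriv (⇑(F n : CircleDeg1Lift)) x - 1| < ε

/-- `Γ` is locally nondiscrete with respect to the `C¹`-topology: some sequence of elements of
`Γ ∖ {id}` converges to the identity in the `C¹`-topology on some open interval of the circle
(an interval is described by a lift chart `]a, b[` with `b ≤ a + 1`). -/
def LocallyC1Nondiscrete (Γ : Subgroup (S1 ≃ₜ S1)) : Prop :=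
  ∃ a b : ℝ, a < b ∧ b ≤ a + 1 ∧
    ∃ (f : ℕ → S1 ≃ₜ S1) (F : ℕ → CircleDeg1Liftˣ),
      (∀ n, f n ∈ Γ ∧ f n ≠ 1 ∧ IsLiftOf (F n : CircleDeg1Lift) (f n)) ∧
      ∀ ε : ℝ, 0 < ε → ∃ N : ℕ, ∀ n ≥ N, ∀ x ∈ Ioo a b,
        |(F n : CircleDeg1Lift) x - x| < ε ∧ |deriv (⇑(F n : CircleDeg1Lift)) x - 1| < ε

/-- `Γ` is locally nondiscrete with respect to the `C⁰`-topology. -/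
def LocallyC0Nondiscrete (Γ : Subgroup (S1 ≃ₜ S1)) : Prop :=
  ∃ a b : ℝ, a < b ∧ b ≤ a + 1 ∧
    ∃ (f : ℕ → S1 ≃ₜ S1) (F : ℕ → CircleDeg1Liftˣ),
      (∀ n, f n ∈ Γ ∧ f n ≠ 1 ∧ IsLiftOf (F n : CircleDeg1Lift) (f n)) ∧
      ∀ ε : ℝ, 0 < ε → ∃ N : ℕ, ∀ n ≥ N, ∀ x ∈ Ioo a b,
        |(F n : CircleDeg1Lift) x - x| < ε

/-- There is a `Γ`-invariant Borel probability measure on the circle. -/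
def HasInvariantProbMeasure (Γ : Subgroup (S1 ≃ₜ S1)) : Prop :=
  ∃ μ : Measure S1, IsProbabilityMeasure μ ∧ ∀ γ ∈ Γ, Measure.map (⇑γ) μ = μ

/-- `Γ` is minimal: every orbit is dense in the circle. -/
def IsMinimalSubgroup (Γ : Subgroup (S1 ≃ₜ S1)) : Prop :=
  ∀ x : S1, Dense (circleOrbit Γ x)

/-- The closed arc `π([a, b])` of the circle. -/
def closedArc (a b : ℝ) : Set S1 :=
  (fun x : ℝ => (x : S1)) '' Icc a b

/-- The closed arc `π([a,b])` is `Γ`-contractible: some sequence `gₙ ∈ Γ` shrinks its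
length to zero (lengths are measured via orientation-preserving lifts). -/
def ContractibleArc (Γ : Subgroup (S1 ≃ₜ S1)) (a b : ℝ) : Prop :=
  ∃ (g : ℕ → S1 ≃ₜ S1) (G : ℕ → CircleDeg1Liftˣ),
    (∀ n, g n ∈ Γ ∧ IsLiftOf (G n : CircleDeg1Lift) (g n)) ∧
    Tendsto (fun n => (G n : CircleDeg1Lift) b - (G n : CircleDeg1Lift) a) atTop (𝓝 0)

/-- `Φ` is a local flow of the vector field `X` on the set `K` for times `0 ≤ t ≤ t₀`,
staying inside the domain `dom` of `X`. -/
def IsLocalFlowOn (X : ℝ → ℝ) (dom : Set ℝ) (Φ : ℝ → ℝ → ℝ) (K : Set ℝ) (t₀ : ℝ) : Prop :=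
  (∀ x ∈ K, Φ 0 x = x) ∧
  ∀ x ∈ K, ∀ t ∈ Icc (0 : ℝ) t₀, Φ t x ∈ dom ∧
    HasDerivWithinAt (fun s => Φ s x) (X (Φ t x)) (Icc (0 : ℝ) t₀) t

/-- The local vector field `X` on the open interval `]a,b[` (in a lift chart of the circle)
is in the `C⁰`-closure of `Γ` relative to this interval: every time-`t₀` map of its local flow
defined on a compact subinterval is a uniform limit of (lifts of) elements of `Γ`. -/
def InC0Closure (Γ : Subgroup (S1 ≃ₜ S1)) (a b : ℝ) (X : ℝ → ℝ) : Prop :=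
  ∀ c d : ℝ, a < c → c ≤ d → d < b →
    ∀ t₀ : ℝ, 0 < t₀ → ∀ Φ : ℝ → ℝ → ℝ,
      IsLocalFlowOn X (Ioo a b) Φ (Icc c d) t₀ →
      ∃ (γ : ℕ → S1 ≃ₜ S1) (G : ℕ → CircleDeg1Liftˣ),
        (∀ n, γ n ∈ Γ ∧ IsLiftOf (G n : CircleDeg1Lift) (γ n)) ∧
        TendstoUniformlyOn (fun n x => (G n : CircleDeg1Lift) x) (fun x => Φ t₀ x)
          atTop (Icc c d)

theorem MulAction.exists_pow_smul_eq_self_of_finite_orbit {G α : Type*} [Group G] [MulAction G α]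
    {a : α} (h : (orbit G a).Finite) : ∃ n, 0 < n ∧ ∀ g : G, g ^ n • a = a := by
  have := h.to_subtype
  refine ⟨Nat.card (Equiv.Perm (orbit G a)), Nat.card_pos, fun g => ?_⟩
  have hperm := pow_card_eq_one' (x := MulAction.toPermHom G (orbit G a) g)
  rw [← map_pow] at hperm
  exact congrArg Subtype.val (DFunLike.congr_fun hperm ⟨a, mem_orbit_self a⟩)

instance : MulAction (S1 ≃ₜ S1) S1 where
  smul f x := f x
  one_smul _ := rfl
  mul_smul _ _ _ := rfl

theorem circleOrbit_eq_orbit (Γ : Subgroup (S1 ≃ₜ S1)) (x : S1) :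
    circleOrbit Γ x = MulAction.orbit Γ x := by
  ext y
  simp only [circleOrbit, MulAction.mem_orbit_iff, Subtype.exists, Subgroup.mk_smul, exists_prop]
  rfl

namespace IsLiftOf

theorem one : IsLiftOf 1 1 := fun _ => rfl

theorem mul {F G : CircleDeg1Lift} {f g : S1 ≃ₜ S1} (hF : IsLiftOf F f) (hG : IsLiftOf G g) :
    IsLiftOf (F * G) (f * g) := fun x => by
  change f (g x) = _
  rw [hG x, hF (G x), CircleDeg1Lift.mul_apply]

theorem pow {F : CircleDeg1Lift} {f : S1 ≃ₜ S1} (h : IsLiftOf F f) :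
    ∀ n : ℕ, IsLiftOf (F ^ n) (f ^ n)
  | 0 => one
  | n + 1 => by simpa only [pow_succ] using (h.pow n).mul h

theorem nsmul_translationNumber_eq_zero {F : CircleDeg1Lift} {f : S1 ≃ₜ S1} (h : IsLiftOf F f)
    {n : ℕ} {x : S1} (hx : (f ^ n) x = x) : n • (F.translationNumber : S1) = 0 := by
  obtain ⟨r, rfl⟩ := QuotientAddGroup.mk_surjective x
  have hr : (((F ^ n) r - r : ℝ) : S1) = 0 := by
    rw [AddCircle.coe_sub, ← h.pow n, hx, sub_self]
  obtain ⟨m, hm⟩ := (AddCircle.coe_eq_zero_iff 1).mp hr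
  have hτ : (F ^ n).translationNumber = m :=
    (F ^ n).translationNumber_of_eq_add_int (x := r) (by rw [zsmul_one] at hm; linarith)
  rw [← AddCircle.coe_nsmul, nsmul_eq_mul, ← CircleDeg1Lift.translationNumber_pow, hτ,
    AddCircle.coe_eq_zero_iff]
  exact ⟨m, zsmul_one _⟩

end IsLiftOf

theorem OrientationPreserving.nsmul_rotationNumber_eq_zero {f : S1 ≃ₜ S1}
    (hf : OrientationPreserving f) {n : ℕ} {x : S1} (hx : (f ^ n) x = x) :
    n • rotationNumber f = 0 := by
  unfold OrientationPreserving at hf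
  rw [rotationNumber, dif_pos hf]
  exact hf.choose_spec.nsmul_translationNumber_eq_zero hx

/-- If a subgroup of `Homeo₊(S¹)` has a finite orbit, then its image under
the rotation number function is finite. -/
theorem finite_orbit_implies_finite_rotation_image
    (Γ : Subgroup (S1 ≃ₜ S1)) (hΓ : ∀ f ∈ Γ, OrientationPreserving f)
    (horb : HasFiniteOrbit Γ) :
    (rotationNumber '' (Γ : Set (S1 ≃ₜ S1))).Finite := by
  obtain ⟨x, hfin⟩ := horb
  rw [circleOrbit_eq_orbit] at hfin
  obtain ⟨N, hN, hperiodic⟩ := MulAction.exists_pow_smul_eq_self_of_finite_orbit hfin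
  refine (AddCircle.finite_torsion 1 hN).subset ?_
  rintro _ ⟨γ, hγ, rfl⟩
  exact (hΓ γ hγ).nsmul_rotationNumber_eq_zero (hperiodic ⟨γ, hγ⟩)

end
end

section
/- Let {gₙ} be a sequence of C¹-maps from an open interval I ⊂ ℝ into ℝ, and let {λₙ} be a sequence of positive real numbers diverging to infinity. Assume there exist positive real numbers A₁, A₂, A₃ such that for all n: A₁ ≤ inf_{x∈I} λₙ|(gₙ−id)(x)| ≤ sup_{x∈I} λₙ|(gₙ−id)(x)| ≤ A₂ and sup_{x∈I} λₙ|(gₙ−id)′(x)| ≤ A₃. Then for each open, relatively compact subinterval J of I there exist a nowhere vanishing continuous vector field X on J and a subsequence of {gₙ} (still denoted {gₙ}) with the following property: for every compact subinterval J₀ of J and every t₀ > 0 such that the local flow φᵗ associated to X is defined on J₀ for all 0 ≤ t ≤ t₀, the sequence {gₙ^{[λₙt₀]}} (where [λₙt₀] is the integer part of λₙt₀ and gₙ^k denotes the k-th iterate) converges to φ^{t₀} uniformly on J₀. -/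
open Filter Topology Set MeasureTheory Classical

noncomputable section

/-! The rescaled displacements `λₙ (gₙ - id)` are uniformly bounded and uniformly Lipschitz, so by
Arzelà–Ascoli a subsequence converges uniformly on a slightly larger compact interval to a
Lipschitz field `X`, which inherits `A₁ ≤ |X|`. Each `gₙ` is then an Euler step of size `1/λₙ` for
`X` up to an error `o(1/λₙ)`, and the classical convergence proof of Euler's method (local error
`O(δ/λ + 1/λ²)`, amplified by at most `1 + K/λ` per step, summed by a discrete Grönwall
inequality) shows that `⌊λₙ t₀⌋` steps approximate the time-`t₀` map of the flow uniformly. The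
same error bound keeps the iterates inside the interval where `X` is controlled. -/

open scoped NNReal BoundedContinuousFunction

theorem exists_strictMono_tendstoUniformlyOn_Icc {a b M : ℝ} {K : ℝ≥0} (hab : a ≤ b)
    (f : ℕ → ℝ → ℝ) (hbound : ∀ n, ∀ x ∈ Icc a b, |f n x| ≤ M)
    (hlip : ∀ n, LipschitzOnWith K (f n) (Icc a b)) :
    ∃ (X : ℝ → ℝ) (φ : ℕ → ℕ), StrictMono φ ∧ LipschitzWith K X ∧
      TendstoUniformlyOn (fun n => f (φ n)) X atTop (Icc a b) := by
  have : CompactSpace (Icc a b) := isCompact_iff_compactSpace.1 isCompact_Icc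
  let F : ℕ → (Icc a b →ᵇ ℝ) := fun n =>
    .mkOfCompact ⟨fun x : Icc a b => f n x, (hlip n).to_restrict.continuous⟩
  have hcomp : IsCompact (closure (range F)) := by
    refine BoundedContinuousFunction.arzela_ascoli (Metric.closedBall 0 M)
      (isCompact_closedBall 0 M) _ ?_ ?_
    · rintro _ x ⟨n, rfl⟩
      rw [Metric.mem_closedBall, dist_zero_right, Real.norm_eq_abs]
      exact hbound n x x.2
    · refine (LipschitzWith.uniformEquicontinuous _ K ?_).equicontinuous
      rintro ⟨_, n, rfl⟩
      exact (hlip n).to_restrict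
  obtain ⟨F₀, -, φ, hφ, hlim⟩ := hcomp.tendsto_subseq fun n => subset_closure ⟨n, rfl⟩
  have hF₀ : LipschitzWith K F₀ :=
    (isClosed_setOfPred_lipschitzWith K).mem_of_tendsto
      ((BoundedContinuousFunction.continuous_coe.tendsto _).comp hlim)
      (Eventually.of_forall fun n => (hlip (φ n)).to_restrict)
  refine ⟨F₀ ∘ projIcc a b hab, φ, hφ,
    by simpa using hF₀.comp (LipschitzWith.projIcc hab), ?_⟩
  rw [tendstoUniformlyOn_iff_tendstoUniformly_comp_coe]
  convert BoundedContinuousFunction.tendsto_iff_tendstoUniformly.1 hlim using 2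
  · rfl
  · ext x
    simp [projIcc_val]

theorem lipschitzOnWith_const_mul_sub_id {g : ℝ → ℝ} {s : Set ℝ} {c A : ℝ} (hs : IsOpen s)
    (hs' : Convex ℝ s) (hg : ContDiffOn ℝ 1 g s) (hc : 0 ≤ c)
    (hA : ∀ x ∈ s, c * |deriv (fun y => g y - y) x| ≤ A) :
    LipschitzOnWith A.toNNReal (fun x => c * (g x - x)) s := by
  have hdiff : ∀ x ∈ s, DifferentiableAt ℝ (fun y => g y - y) x := fun x hx =>
    ((hg.differentiableOn one_ne_zero).differentiableAt (hs.mem_nhds hx)).sub differentiableAt_id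
  refine hs'.lipschitzOnWith_of_nnnorm_deriv_le (fun x hx => (hdiff x hx).const_mul c)
    fun x hx => ?_
  rw [deriv_const_mul _ (hdiff x hx), ← NNReal.coe_le_coe, coe_nnnorm, Real.norm_eq_abs,
    abs_mul, abs_of_nonneg hc, Real.coe_toNNReal']
  exact le_max_of_le_left (hA x hx)

theorem dist_iterate_le_of_dist_step_le {α : Type*} [PseudoMetricSpace α] {G : α → α}
    {w : ℕ → α} {D : Set α} {a b r : ℝ} {N : ℕ} (ha : 0 ≤ a) (hb : 0 ≤ b)
    (hstep : ∀ k < N, ∀ y ∈ D, dist (G y) (w (k + 1)) ≤ (1 + a) * dist y (w k) + b)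
    (hD : ∀ k ≤ N, ∀ y, dist y (w k) ≤ r → y ∈ D) (hr : N * b * (1 + a) ^ N ≤ r) :
    ∀ k ≤ N, dist (G^[k] (w 0)) (w k) ≤ k * b * (1 + a) ^ k := by
  have h1a : 1 ≤ 1 + a := le_add_of_nonneg_right ha
  intro k
  induction k with
  | zero => simp
  | succ k ih =>
    intro hk
    have hk_le : dist (G^[k] (w 0)) (w k) ≤ k * b * (1 + a) ^ k := ih (by omega)
    have hmem : G^[k] (w 0) ∈ D := hD k (by omega) _ <| hk_le.trans <| hr.trans' <| by
      gcongr <;> omega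
    rw [Function.iterate_succ_apply']
    calc dist (G (G^[k] (w 0))) (w (k + 1))
        ≤ (1 + a) * dist (G^[k] (w 0)) (w k) + b := hstep k hk _ hmem
      _ ≤ (1 + a) * (k * b * (1 + a) ^ k) + b * (1 + a) ^ (k + 1) := by
        gcongr
        exact le_mul_of_one_le_right hb (one_le_pow₀ h1a)
      _ = (k + 1 : ℕ) * b * (1 + a) ^ (k + 1) := by push_cast; ring

theorem natCast_mul_div_mul_one_add_div_pow_le {N : ℕ} {L t₀ K c : ℝ} (hL : 0 < L)
    (hK : 0 ≤ K) (hc : 0 ≤ c) (hN : N ≤ L * t₀) :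
    N * (c / L) * (1 + K / L) ^ N ≤ t₀ * Real.exp (K * t₀) * c := by
  have hNL : (N : ℝ) / L ≤ t₀ := by rw [div_le_iff₀ hL]; linarith
  have ht₀ : 0 ≤ t₀ := hNL.trans' (by positivity)
  have hpow : (1 + K / L) ^ N ≤ Real.exp (K * t₀) :=
    calc (1 + K / L) ^ N ≤ Real.exp (K / L) ^ N := by
          gcongr
          linarith [Real.add_one_le_exp (K / L)]
      _ = Real.exp (K * (N / L)) := by rw [← Real.exp_nat_mul]; ring_nf
      _ ≤ Real.exp (K * t₀) := by gcongr
  calc N * (c / L) * (1 + K / L) ^ N = N / L * c * (1 + K / L) ^ N := by ring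
    _ ≤ t₀ * c * Real.exp (K * t₀) := by gcongr
    _ = t₀ * Real.exp (K * t₀) * c := by ring

namespace IsLocalFlowOn

variable {X : ℝ → ℝ} {dom s D : Set ℝ} {Φ : ℝ → ℝ → ℝ} {t₀ M : ℝ} {x : ℝ} {K : ℝ≥0}

theorem abs_sub_le_mul (hΦ : IsLocalFlowOn X dom Φ s t₀) (hXM : ∀ y ∈ dom, |X y| ≤ M)
    (hx : x ∈ s) {t u : ℝ} (ht : t ∈ Icc 0 t₀) (hu : u ∈ Icc 0 t₀) :
    |Φ u x - Φ t x| ≤ M * |u - t| := by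
  simpa only [Real.norm_eq_abs] using
    (convex_Icc 0 t₀).norm_image_sub_le_of_norm_hasDerivWithin_le
      (fun σ hσ => (hΦ.2 x hx σ hσ).2)
      (fun σ hσ => by simpa only [Real.norm_eq_abs] using hXM _ (hΦ.2 x hx σ hσ).1) ht hu

theorem abs_sub_sub_mul_le (hΦ : IsLocalFlowOn X dom Φ s t₀) (hXM : ∀ y ∈ dom, |X y| ≤ M)
    (hXK : LipschitzOnWith K X dom) (hx : x ∈ s) {t u : ℝ} (ht : 0 ≤ t) (htu : t ≤ u)
    (hu : u ≤ t₀) :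
    |Φ u x - Φ t x - (u - t) * X (Φ t x)| ≤ M * K * (u - t) ^ 2 := by
  have hsub : Icc t u ⊆ Icc 0 t₀ := Icc_subset_Icc ht hu
  have hmem : ∀ σ ∈ Icc t u, Φ σ x ∈ dom := fun σ hσ => (hΦ.2 x hx σ (hsub hσ)).1
  have hM : 0 ≤ M := (abs_nonneg _).trans (hXM _ (hmem t (left_mem_Icc.2 htu)))
  have hderiv : ∀ σ ∈ Icc t u, HasDerivWithinAt (fun σ => Φ σ x - σ * X (Φ t x))
      (X (Φ σ x) - X (Φ t x)) (Icc t u) σ := fun σ hσ =>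
    ((hΦ.2 x hx σ (hsub hσ)).2.mono hsub).sub
      (hasDerivAt_mul_const (X (Φ t x))).hasDerivWithinAt
  have hbound : ∀ σ ∈ Icc t u, ‖X (Φ σ x) - X (Φ t x)‖ ≤ M * K * (u - t) := fun σ hσ => by
    have hσt : |σ - t| ≤ u - t := by rw [abs_of_nonneg (by linarith [hσ.1])]; linarith [hσ.2]
    calc ‖X (Φ σ x) - X (Φ t x)‖
        ≤ K * |Φ σ x - Φ t x| :=
          hXK.dist_le_mul _ (hmem σ hσ) _ (hmem t (left_mem_Icc.2 htu))
      _ ≤ K * (M * |σ - t|) := by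
          gcongr
          exact hΦ.abs_sub_le_mul hXM hx (hsub (left_mem_Icc.2 htu)) (hsub hσ)
      _ ≤ M * K * (u - t) := by rw [← mul_assoc, mul_comm (K : ℝ)]; gcongr
  have := (convex_Icc t u).norm_image_sub_le_of_norm_hasDerivWithin_le hderiv hbound
    (left_mem_Icc.2 htu) (right_mem_Icc.2 htu)
  rw [Real.norm_eq_abs, Real.norm_eq_abs, abs_of_nonneg (sub_nonneg.2 htu)] at this
  rw [show Φ u x - Φ t x - (u - t) * X (Φ t x)
      = Φ u x - u * X (Φ t x) - (Φ t x - t * X (Φ t x)) by ring, sq, ← mul_assoc]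
  exact this

variable {G : ℝ → ℝ} {L δ : ℝ}

theorem abs_sub_flow_step_le (hΦ : IsLocalFlowOn X dom Φ s t₀)
    (hXM : ∀ y ∈ dom, |X y| ≤ M) (hXK : LipschitzOnWith K X D) (hdomD : dom ⊆ D) (hL : 0 < L)
    (hG : ∀ y ∈ D, |L * (G y - y) - X y| ≤ δ) (hx : x ∈ s) {t : ℝ} (ht : 0 ≤ t)
    (ht' : t + 1 / L ≤ t₀) {y : ℝ} (hy : y ∈ D) :
    |G y - Φ (t + 1 / L) x| ≤ (1 + K / L) * |y - Φ t x| + (δ + M * K / L) / L := by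
  set z := Φ t x
  have hz : z ∈ D := hdomD (hΦ.2 x hx t ⟨ht, by linarith [one_div_pos.2 hL]⟩).1
  have hconsistency : |(L * (G y - y) - X y) / L| ≤ δ / L := by
    rw [abs_div, abs_of_pos hL]; gcongr; exact hG y hy
  have hlip : |(X y - X z) / L| ≤ K * |y - z| / L := by
    rw [abs_div, abs_of_pos hL]; gcongr; exact hXK.dist_le_mul y hy z hz
  have hflow : |Φ (t + 1 / L) x - z - (t + 1 / L - t) * X z|
      ≤ M * K * (t + 1 / L - t) ^ 2 :=
    hΦ.abs_sub_sub_mul_le hXM (hXK.mono hdomD) hx ht (by linarith [one_div_pos.2 hL]) ht'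
  calc |G y - Φ (t + 1 / L) x|
      = |(y - z) + (L * (G y - y) - X y) / L + (X y - X z) / L
          - (Φ (t + 1 / L) x - z - (t + 1 / L - t) * X z)| := by
        congr 1; field_simp; ring
    _ ≤ |y - z| + δ / L + K * |y - z| / L + M * K * (t + 1 / L - t) ^ 2 := by
        refine (abs_sub _ _).trans (add_le_add ?_ hflow)
        refine (abs_add_le _ _).trans (add_le_add ?_ hlip)
        exact (abs_add_le _ _).trans (add_le_add le_rfl hconsistency)
    _ = (1 + K / L) * |y - z| + (δ + M * K / L) / L := by field_simp; ring

theorem abs_iterate_floor_sub_le (hΦ : IsLocalFlowOn X dom Φ s t₀) (ht₀ : 0 ≤ t₀)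
    (hXM : ∀ y ∈ dom, |X y| ≤ M) (hXK : LipschitzOnWith K X D) {r : ℝ}
    (hD : ∀ y, ∀ z ∈ dom, dist y z ≤ r → y ∈ D) (hL : 0 < L) (hδ : 0 ≤ δ)
    (hG : ∀ y ∈ D, |L * (G y - y) - X y| ≤ δ)
    (hr : t₀ * Real.exp (K * t₀) * (δ + M * K / L) ≤ r) (hx : x ∈ s) :
    |G^[⌊L * t₀⌋₊] x - Φ t₀ x| ≤ t₀ * Real.exp (K * t₀) * (δ + M * K / L) + M / L := by
  set N := ⌊L * t₀⌋₊
  have hNt : (N : ℝ) ≤ L * t₀ := Nat.floor_le (by positivity)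
  have htime : ∀ k ≤ N, (k : ℝ) / L ∈ Icc 0 t₀ := fun k hk => ⟨by positivity, by
    rw [div_le_iff₀ hL]; linarith [(Nat.cast_le (α := ℝ)).2 hk]⟩
  have hdom : ∀ k ≤ N, Φ (k / L) x ∈ dom := fun k hk => (hΦ.2 x hx _ (htime k hk)).1
  have hM : 0 ≤ M := (abs_nonneg _).trans (hXM _ (hdom 0 N.zero_le))
  have hc : 0 ≤ δ + M * K / L := add_nonneg hδ (div_nonneg (mul_nonneg hM K.2) hL.le)
  have hdomD : dom ⊆ D := fun z hz =>
    hD z z hz (by simpa using hr.trans' (mul_nonneg (by positivity) hc))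
  have hbound := natCast_mul_div_mul_one_add_div_pow_le (N := N) hL K.2 hc hNt
  have hiter := dist_iterate_le_of_dist_step_le (G := G) (w := fun k => Φ (k / L) x)
    (div_nonneg K.2 hL.le) (div_nonneg hc hL.le) (fun k hk y hy => by
      rw [Real.dist_eq, Real.dist_eq, Nat.cast_succ, add_div]
      exact hΦ.abs_sub_flow_step_le hXM hXK hdomD hL hG hx (htime k hk.le).1
        (by rw [← add_div]; exact_mod_cast (htime (k + 1) hk).2) hy)
    (fun k hk y => hD y _ (hdom k hk)) (hbound.trans hr) N le_rfl
  simp only [CharP.cast_eq_zero, zero_div, hΦ.1 x hx, Real.dist_eq] at hiter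
  have htail : |Φ (N / L) x - Φ t₀ x| ≤ M / L := by
    rw [abs_sub_comm]
    refine (hΦ.abs_sub_le_mul hXM hx (htime N le_rfl) ⟨ht₀, le_rfl⟩).trans ?_
    rw [abs_of_nonneg (sub_nonneg.2 (htime N le_rfl).2), div_eq_mul_one_div M]
    gcongr
    rw [sub_le_iff_le_add, ← add_div, le_div_iff₀ hL]
    linarith [Nat.lt_floor_add_one (L * t₀)]
  calc |G^[N] x - Φ t₀ x| ≤ |G^[N] x - Φ (N / L) x| + |Φ (N / L) x - Φ t₀ x| :=
        abs_sub_le _ _ _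
    _ ≤ t₀ * Real.exp (K * t₀) * (δ + M * K / L) + M / L :=
        add_le_add (hiter.trans hbound) htail

theorem tendstoUniformlyOn_iterate_floor {G : ℕ → ℝ → ℝ} {L : ℕ → ℝ} {r : ℝ}
    (hΦ : IsLocalFlowOn X dom Φ s t₀) (ht₀ : 0 ≤ t₀) (hXM : ∀ y ∈ dom, |X y| ≤ M)
    (hXK : LipschitzOnWith K X D) (hr : 0 < r) (hD : ∀ y, ∀ z ∈ dom, dist y z ≤ r → y ∈ D)
    (hL : Tendsto L atTop atTop)
    (hG : TendstoUniformlyOn (fun n y => L n * (G n y - y)) X atTop D) :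
    TendstoUniformlyOn (fun n => (G n)^[⌊L n * t₀⌋₊]) (Φ t₀) atTop s := by
  rw [Metric.tendstoUniformlyOn_iff]
  intro ε hε
  set C := t₀ * Real.exp (K * t₀)
  -- each of the error terms `C δ`, `C M K / L n` and `M / L n` will be below `η`
  set η := min r ε / 3
  have hη : 0 < η := by positivity
  have hδ : 0 < η / (C + 1) := by positivity
  have hCδ : C * (η / (C + 1)) < η := by
    rw [mul_div_assoc', div_lt_iff₀ (by positivity)]; nlinarith
  have hsmall : ∀ c : ℝ, ∀ᶠ n in atTop, c / L n < η := fun c =>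
    (tendsto_const_nhds.div_atTop hL).eventually (gt_mem_nhds hη)
  filter_upwards [Metric.tendstoUniformlyOn_iff.1 hG _ hδ, hL.eventually_gt_atTop 0,
    hsmall (C * (M * K)), hsmall M] with n hGn hLn hdrift htail x hx
  have hsplit : C * (η / (C + 1) + M * K / L n) = C * (η / (C + 1)) + C * (M * K) / L n := by
    ring
  have hη3 : 3 * η ≤ min r ε := by simp only [η]; linarith
  have hbound := hΦ.abs_iterate_floor_sub_le ht₀ hXM hXK hD hLn hδ.le
    (fun y hy => by simpa [Real.dist_eq, abs_sub_comm] using (hGn y hy).le)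
    (by linarith [min_le_left r ε]) hx
  rw [Real.dist_eq, abs_sub_comm]
  linarith [min_le_right r ε]

end IsLocalFlowOn

theorem vector_field_from_nondiscreteness_general
    (α β : ℝ) (g : ℕ → ℝ → ℝ) (hg : ∀ n, ContDiffOn ℝ 1 (g n) (Ioo α β))
    (lam : ℕ → ℝ) (hlampos : ∀ n, 0 < lam n) (hlam : Tendsto lam atTop atTop)
    (A₁ A₂ A₃ : ℝ) (hA₁ : 0 < A₁)
    (hbd : ∀ n, ∀ x ∈ Ioo α β,
      A₁ ≤ lam n * |g n x - x| ∧ lam n * |g n x - x| ≤ A₂ ∧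
      lam n * |deriv (fun y => g n y - y) x| ≤ A₃) :
    ∀ c d : ℝ, α < c → c < d → d < β →
      ∃ (X : ℝ → ℝ) (φ : ℕ → ℕ), StrictMono φ ∧
        ContinuousOn X (Ioo c d) ∧ (∀ x ∈ Ioo c d, X x ≠ 0) ∧
        ∀ e f : ℝ, c < e → e ≤ f → f < d →
          ∀ t₀ : ℝ, 0 < t₀ → ∀ Φ : ℝ → ℝ → ℝ,
            IsLocalFlowOn X (Ioo c d) Φ (Icc e f) t₀ →
            TendstoUniformlyOn
              (fun n x => (g (φ n))^[⌊lam (φ n) * t₀⌋₊] x)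
              (fun x => Φ t₀ x) atTop (Icc e f) := by
  intro c d hc hcd hd
  obtain ⟨c', hαc', hc'c⟩ := exists_between hc
  obtain ⟨d', hdd', hd'β⟩ := exists_between hd
  have hIcc : Icc c' d' ⊆ Ioo α β := Icc_subset_Ioo hαc' hd'β
  have hJ : Ioo c d ⊆ Icc c' d' := Ioo_subset_Icc_self.trans (Icc_subset_Icc hc'c.le hdd'.le)
  have hv : ∀ n, ∀ x ∈ Ioo α β,
      A₁ ≤ |lam n * (g n x - x)| ∧ |lam n * (g n x - x)| ≤ A₂ := fun n x hx => by
    rw [abs_mul, abs_of_pos (hlampos n)]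
    exact ⟨(hbd n x hx).1, (hbd n x hx).2.1⟩
  obtain ⟨X, φ, hφ, hXK, hvX⟩ := exists_strictMono_tendstoUniformlyOn_Icc
    (hc'c.trans (hcd.trans hdd')).le (fun n x => lam n * (g n x - x))
    (fun n x hx => (hv n x (hIcc hx)).2) fun n =>
      (lipschitzOnWith_const_mul_sub_id isOpen_Ioo (convex_Ioo α β) (hg n) (hlampos n).le
        fun x hx => (hbd n x hx).2.2).mono hIcc
  have hX : ∀ x ∈ Icc c' d', A₁ ≤ |X x| ∧ |X x| ≤ A₂ := fun x hx => by
    have hlim := (hvX.tendsto_at hx).abs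
    exact ⟨ge_of_tendsto' hlim fun n => (hv _ x (hIcc hx)).1,
      le_of_tendsto' hlim fun n => (hv _ x (hIcc hx)).2⟩
  refine ⟨X, φ, hφ, hXK.continuous.continuousOn,
    fun x hx => abs_pos.1 (hA₁.trans_le (hX x (hJ hx)).1), ?_⟩
  intro e f _ _ _ t₀ ht₀ Φ hΦ
  refine hΦ.tendstoUniformlyOn_iterate_floor ht₀.le (fun y hy => (hX y (hJ hy)).2)
    hXK.lipschitzOnWith (lt_min (sub_pos.2 hc'c) (sub_pos.2 hdd')) (fun y z hz hyz => ?_)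
    (hlam.comp hφ.tendsto_atTop) hvX
  rw [Real.dist_eq, abs_le] at hyz
  constructor <;>
    linarith [hz.1, hz.2, min_le_left (c - c') (d' - d), min_le_right (c - c') (d' - d)]

/-- (Lemma 3.4 of the paper.) Given `C¹`-maps `gₙ` on an open interval `I`
and `λₙ → ∞` with `A₁ ≤ λₙ|gₙ - id| ≤ A₂` and `λₙ|(gₙ - id)'| ≤ A₃` on `I`, every open
relatively compact subinterval `J = ]c, d[` of `I` carries a nowhere vanishing continuous
vector field `X` such that, along a subsequence, `gₙ^{[λₙ t₀]} → φ^{t₀}` uniformly on any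
compact subinterval `J₀` of `J` on which the local flow `φᵗ` of `X` is defined up to time
`t₀`. -/
theorem vector_field_from_nondiscreteness
    (α β : ℝ) (g : ℕ → ℝ → ℝ) (hg : ∀ n, ContDiffOn ℝ 1 (g n) (Ioo α β))
    (lam : ℕ → ℝ) (hlampos : ∀ n, 0 < lam n) (hlam : Tendsto lam atTop atTop)
    (A₁ A₂ A₃ : ℝ) (hA₁ : 0 < A₁) (hA₂ : 0 < A₂) (hA₃ : 0 < A₃)
    (hbd : ∀ n, ∀ x ∈ Ioo α β,
      A₁ ≤ lam n * |g n x - x| ∧ lam n * |g n x - x| ≤ A₂ ∧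
      lam n * |deriv (fun y => g n y - y) x| ≤ A₃) :
    ∀ c d : ℝ, α < c → c < d → d < β →
      ∃ (X : ℝ → ℝ) (φ : ℕ → ℕ), StrictMono φ ∧
        ContinuousOn X (Ioo c d) ∧ (∀ x ∈ Ioo c d, X x ≠ 0) ∧
        ∀ e f : ℝ, c < e → e ≤ f → f < d →
          ∀ t₀ : ℝ, 0 < t₀ → ∀ Φ : ℝ → ℝ → ℝ,
            IsLocalFlowOn X (Ioo c d) Φ (Icc e f) t₀ →
            TendstoUniformlyOn
              (fun n x => (g (φ n))^[⌊lam (φ n) * t₀⌋₊] x)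
              (fun x => Φ t₀ x) atTop (Icc e f) :=
  vector_field_from_nondiscreteness_general α β g hg lam hlampos hlam A₁ A₂ A₃ hA₁ hbd

end
end

section
/- Let 0 < λ < 1, let j ≥ 1 be an integer, and let δ₁ > 0. Let g be a real analytic function on an open interval I₁ ⊂ ℝ containing [0, δ₁] such that g(0) = 0, (g − id) and its first j derivatives vanish at 0, and g^{(j+1)}(y) < 0 for every y ∈ [0, δ₁]. Put M₁ = sup_{y∈[0,δ₁]} |g^{(j+1)}(y)|, M₂ = inf_{y∈[0,δ₁]} |g^{(j+1)}(y)|, choose 0 < δ₂ < δ₁ and let I = ]δ₂, δ₁[. For n ≥ 1 define gₙ(x) = λ^{−n} g(λⁿ x). Then for every n ≥ 1 and every x ∈ I: (δ₂^{j+1}/(j+1)!) M₂ ≤ λ^{−jn} |(gₙ − id)(x)| ≤ (δ₁^{j+1}/(j+1)!) M₁, and λ^{−jn} |(gₙ − id)′(x)| ≤ (δ₁^j/j!) M₁. -/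
open Filter Topology Set MeasureTheory Classical

noncomputable section

/-! The map `h = g - id` is flat of order `j` at `0`, and `h^{(j+1)} = g^{(j+1)}` because
`j + 1 ≥ 2`. Since `gₙ - id = λ⁻ⁿ h(λⁿ ·)` and `(gₙ - id)' = h'(λⁿ ·)`, Taylor's formula with
Lagrange remainder for `h` and for `h'` at the point `λⁿ x ∈ ]0, δ₁[` gives
`λ^{-jn} |(gₙ - id)(x)| = |g^{(j+1)}(ξ)| x^{j+1} / (j+1)!` and
`λ^{-jn} |(gₙ - id)'(x)| = |g^{(j+1)}(ξ')| x^j / j!` with `ξ, ξ' ∈ ]0, δ₁[`; it remains to bound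
`|g^{(j+1)}|` by its infimum and supremum on `[0, δ₁]` and `x` by `δ₂` and `δ₁`. -/

theorem exists_eq_iteratedDeriv_mul_pow_of_iteratedDeriv_eq_zero {f : ℝ → ℝ} {x₀ x : ℝ} {k : ℕ}
    (hx : x₀ ≠ x) (hf : ∀ y ∈ uIcc x₀ x, ContDiffAt ℝ (k + 1) f y)
    (hflat : ∀ m ≤ k, iteratedDeriv m f x₀ = 0) :
    ∃ ξ ∈ uIoo x₀ x, f x = iteratedDeriv (k + 1) f ξ * (x - x₀) ^ (k + 1) / (k + 1).factorial := by
  obtain ⟨ξ, hξ, htaylor⟩ := taylor_mean_remainder_lagrange_iteratedDeriv hx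
    fun y hy => (hf y hy).contDiffWithinAt
  have hpoly : taylorWithinEval f k (uIcc x₀ x) x₀ x = 0 := by
    rw [taylor_within_apply]
    refine Finset.sum_eq_zero fun m hm => ?_
    have hmk : m ≤ k := Nat.lt_succ_iff.mp (Finset.mem_range.mp hm)
    rw [iteratedDerivWithin_eq_iteratedDeriv (uniqueDiffOn_uIcc hx)
      ((hf x₀ left_mem_uIcc).of_le (by exact_mod_cast hmk.trans k.le_succ)) left_mem_uIcc,
      hflat m hmk, smul_zero]
  exact ⟨ξ, hξ, by rwa [hpoly, sub_zero] at htaylor⟩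

theorem exists_inv_pow_mul_abs_comp_mul_eq {f : ℝ → ℝ} {c x : ℝ} {k : ℕ} (hc : 0 < c)
    (hx : 0 < x) (hf : ∀ y ∈ Icc 0 (c * x), ContDiffAt ℝ (k + 1) f y)
    (hflat : ∀ m ≤ k, iteratedDeriv m f 0 = 0) :
    ∃ ξ ∈ Ioo 0 (c * x), (c ^ (k + 1))⁻¹ * |f (c * x)| =
      x ^ (k + 1) / (k + 1).factorial * |iteratedDeriv (k + 1) f ξ| := by
  have hcx : 0 < c * x := mul_pos hc hx
  rw [← uIcc_of_le hcx.le] at hf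
  obtain ⟨ξ, hξ, hfx⟩ :=
    exists_eq_iteratedDeriv_mul_pow_of_iteratedDeriv_eq_zero hcx.ne hf hflat
  refine ⟨ξ, by rwa [uIoo_of_le hcx.le] at hξ, ?_⟩
  rw [hfx, sub_zero, abs_div, abs_mul, abs_of_pos (pow_pos hcx _), Nat.abs_cast, mul_pow]
  field_simp

theorem iteratedDeriv_fun_sub_id {𝕜 : Type*} [NontriviallyNormedField 𝕜] {f : 𝕜 → 𝕜} {n : ℕ}
    {x : 𝕜} (hn : 2 ≤ n) (hf : ContDiffAt 𝕜 n f x) :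
    iteratedDeriv n (fun y => f y - y) x = iteratedDeriv n f x := by
  rw [iteratedDeriv_fun_sub (g := fun y => y) hf contDiffAt_fun_id, iteratedDeriv_fun_id,
    if_neg (by omega), if_neg (by omega), sub_zero]

theorem deriv_inv_mul_comp_mul_sub_id {c : ℝ} (hc : c ≠ 0) (g : ℝ → ℝ) (x : ℝ) :
    deriv (fun y => c⁻¹ * g (c * y) - y) x = deriv (fun y => g y - y) (c * x) := by
  have hconj : (fun y => c⁻¹ * g (c * y) - y) = fun y => c⁻¹ * (fun z => g z - z) (c * y) := by
    funext y
    field_simp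
  rw [hconj, deriv_const_mul_field, deriv_comp_mul_left c (fun z => g z - z) x, smul_eq_mul,
    inv_mul_cancel_left₀ hc]

section Conjugate

variable {g : ℝ → ℝ} {c x : ℝ} {j : ℕ}

theorem exists_inv_pow_mul_abs_conj_sub_id_eq (hj : 1 ≤ j) (hc : 0 < c) (hx : 0 < x)
    (hg : ∀ y ∈ Icc 0 (c * x), ContDiffAt ℝ (j + 1) g y)
    (hflat : ∀ m ≤ j, iteratedDeriv m (fun y => g y - y) 0 = 0) :
    ∃ ξ ∈ Ioo 0 (c * x), (c ^ j)⁻¹ * |c⁻¹ * g (c * x) - x| =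
      x ^ (j + 1) / (j + 1).factorial * |iteratedDeriv (j + 1) g ξ| := by
  obtain ⟨ξ, hξ, hval⟩ := exists_inv_pow_mul_abs_comp_mul_eq hc hx
    (fun y hy => (hg y hy).sub contDiffAt_fun_id) hflat
  refine ⟨ξ, hξ, ?_⟩
  have hconj : c⁻¹ * g (c * x) - x = c⁻¹ * (g (c * x) - c * x) := by field_simp
  rw [← iteratedDeriv_fun_sub_id (n := j + 1) (by omega)
    (by exact_mod_cast hg ξ (Ioo_subset_Icc_self hξ)), ← hval, hconj,
    abs_mul, abs_inv, abs_of_pos hc, pow_succ, mul_inv, mul_assoc]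

theorem exists_inv_pow_mul_abs_deriv_conj_sub_id_eq (hj : 1 ≤ j) (hc : 0 < c) (hx : 0 < x)
    (hg : ∀ y ∈ Icc 0 (c * x), ContDiffAt ℝ (j + 1) g y)
    (hflat : ∀ m ≤ j, iteratedDeriv m (fun y => g y - y) 0 = 0) :
    ∃ ξ ∈ Ioo 0 (c * x), (c ^ j)⁻¹ * |deriv (fun y => c⁻¹ * g (c * y) - y) x| =
      x ^ j / j.factorial * |iteratedDeriv (j + 1) g ξ| := by
  obtain ⟨k, rfl⟩ := Nat.exists_eq_add_of_le' hj
  obtain ⟨ξ, hξ, hder⟩ := exists_inv_pow_mul_abs_comp_mul_eq hc hx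
    (fun y hy => ((hg y hy).sub contDiffAt_fun_id).derivWithin (by push_cast; rfl))
    (fun m hm => by rw [← iteratedDeriv_succ']; exact hflat (m + 1) (by omega))
  refine ⟨ξ, hξ, ?_⟩
  rw [deriv_inv_mul_comp_mul_sub_id hc.ne', hder, ← iteratedDeriv_succ',
    iteratedDeriv_fun_sub_id (n := k + 1 + 1) (by omega)
    (by exact_mod_cast hg ξ (Ioo_subset_Icc_self hξ))]

end Conjugate

theorem conjugate_estimates_general
    (lam : ℝ) (hlam0 : 0 < lam) (hlam1 : lam < 1)
    (j : ℕ) (hj : 1 ≤ j)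
    (δ₁ δ₂ : ℝ) (hδ₂ : 0 < δ₂)
    (α β : ℝ) (hI : Icc (0 : ℝ) δ₁ ⊆ Ioo α β)
    (g : ℝ → ℝ) (hg : AnalyticOnNhd ℝ g (Ioo α β))
    (hvanish : ∀ m : ℕ, m ≤ j → iteratedDeriv m (fun x => g x - x) 0 = 0) :
    ∀ n : ℕ, 1 ≤ n → ∀ x ∈ Ioo δ₂ δ₁,
      (δ₂ ^ (j + 1) / ((j + 1).factorial : ℝ)) *
          sInf ((fun y => |iteratedDeriv (j + 1) g y|) '' Icc (0 : ℝ) δ₁)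
        ≤ (lam ^ (j * n))⁻¹ * |(lam ^ n)⁻¹ * g (lam ^ n * x) - x| ∧
      (lam ^ (j * n))⁻¹ * |(lam ^ n)⁻¹ * g (lam ^ n * x) - x|
        ≤ (δ₁ ^ (j + 1) / ((j + 1).factorial : ℝ)) *
          sSup ((fun y => |iteratedDeriv (j + 1) g y|) '' Icc (0 : ℝ) δ₁) ∧
      (lam ^ (j * n))⁻¹ * |deriv (fun y => (lam ^ n)⁻¹ * g (lam ^ n * y) - y) x|
        ≤ (δ₁ ^ j / (j.factorial : ℝ)) *
          sSup ((fun y => |iteratedDeriv (j + 1) g y|) '' Icc (0 : ℝ) δ₁) := by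
  intro n hn x ⟨hδ₂x, hxδ₁⟩
  set S := (fun y => |iteratedDeriv (j + 1) g y|) '' Icc (0 : ℝ) δ₁
  have hx : 0 < x := hδ₂.trans hδ₂x
  have hδ₁ : 0 < δ₁ := hx.trans hxδ₁
  have hc : 0 < lam ^ n := pow_pos hlam0 n
  have hIcc : Icc 0 (lam ^ n * x) ⊆ Icc 0 δ₁ := Icc_subset_Icc_right
    ((mul_lt_of_lt_one_left hx (pow_lt_one₀ hlam0.le hlam1 (by omega))).trans hxδ₁).le
  have hgc : ∀ y ∈ Icc 0 (lam ^ n * x), ContDiffAt ℝ (j + 1) g y :=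
    fun y hy => (hg y (hI (hIcc hy))).contDiffAt
  have hS : ∀ ξ ∈ Ioo 0 (lam ^ n * x), |iteratedDeriv (j + 1) g ξ| ∈ S :=
    fun ξ hξ => mem_image_of_mem _ (hIcc (Ioo_subset_Icc_self hξ))
  have hScompact : IsCompact S := isCompact_Icc.image_of_continuousOn <| by
    rw [iteratedDeriv_eq_iterate]
    exact ((hg.iterated_deriv _).continuousOn.mono hI).abs
  have hSnonneg : 0 ≤ sInf S := Real.sInf_nonneg <| by
    rintro _ ⟨y, -, rfl⟩
    exact abs_nonneg _
  obtain ⟨ξ, hξ, hval⟩ := exists_inv_pow_mul_abs_conj_sub_id_eq hj hc hx hgc hvanish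
  obtain ⟨ξ', hξ', hder⟩ := exists_inv_pow_mul_abs_deriv_conj_sub_id_eq hj hc hx hgc hvanish
  rw [mul_comm j n, pow_mul, hval, hder]
  refine ⟨?_, ?_, ?_⟩
  · exact mul_le_mul (by gcongr) (csInf_le hScompact.bddBelow (hS ξ hξ)) hSnonneg (by positivity)
  · exact mul_le_mul (by gcongr) (le_csSup hScompact.bddAbove (hS ξ hξ)) (abs_nonneg _)
      (div_nonneg (pow_nonneg hδ₁.le _) (by positivity))
  · exact mul_le_mul (by gcongr) (le_csSup hScompact.bddAbove (hS ξ' hξ')) (abs_nonneg _)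
      (div_nonneg (pow_nonneg hδ₁.le _) (by positivity))

/-- (Lemma 3.8 of the paper.) Estimates for the conjugates
`gₙ(x) = λ⁻ⁿ g(λⁿ x)` of `g` by the contraction `f(x) = λ x`, where `g - id` vanishes to
order `j` at `0` and `g^{(j+1)} < 0` on `[0, δ₁]`. -/
theorem conjugate_estimates
    (lam : ℝ) (hlam0 : 0 < lam) (hlam1 : lam < 1)
    (j : ℕ) (hj : 1 ≤ j)
    (δ₁ δ₂ : ℝ) (hδ₂ : 0 < δ₂) (hδ : δ₂ < δ₁)
    (α β : ℝ) (hI : Icc (0 : ℝ) δ₁ ⊆ Ioo α β)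
    (g : ℝ → ℝ) (hg : AnalyticOnNhd ℝ g (Ioo α β)) (hg0 : g 0 = 0)
    (hvanish : ∀ m : ℕ, m ≤ j → iteratedDeriv m (fun x => g x - x) 0 = 0)
    (hneg : ∀ y ∈ Icc (0 : ℝ) δ₁, iteratedDeriv (j + 1) g y < 0) :
    ∀ n : ℕ, 1 ≤ n → ∀ x ∈ Ioo δ₂ δ₁,
      (δ₂ ^ (j + 1) / ((j + 1).factorial : ℝ)) *
          sInf ((fun y => |iteratedDeriv (j + 1) g y|) '' Icc (0 : ℝ) δ₁)
        ≤ (lam ^ (j * n))⁻¹ * |(lam ^ n)⁻¹ * g (lam ^ n * x) - x| ∧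
      (lam ^ (j * n))⁻¹ * |(lam ^ n)⁻¹ * g (lam ^ n * x) - x|
        ≤ (δ₁ ^ (j + 1) / ((j + 1).factorial : ℝ)) *
          sSup ((fun y => |iteratedDeriv (j + 1) g y|) '' Icc (0 : ℝ) δ₁) ∧
      (lam ^ (j * n))⁻¹ * |deriv (fun y => (lam ^ n)⁻¹ * g (lam ^ n * y) - y) x|
        ≤ (δ₁ ^ j / (j.factorial : ℝ)) *
          sSup ((fun y => |iteratedDeriv (j + 1) g y|) '' Icc (0 : ℝ) δ₁) :=
  conjugate_estimates_general lam hlam0 hlam1 j hj δ₁ δ₂ hδ₂ α β hI g hg hvanish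

end
end

section
/- Let I₁ be an open interval in ℝ and let I₂ be an open, relatively compact subinterval of I₁. For every integer n ≥ 1 and every real ε > 0 there exists δ > 0 such that for every C¹-map h : I₁ → ℝ with ‖h − id‖_{1,I₁} < δ and every point x ∈ I₂, the iterates h(x), h²(x), …, hⁿ(x) are defined (they remain in I₁) and |(hⁿ − id)(x) − n·(h − id)(x)| ≤ ε·|(h − id)(x)|. -/
open Filter Topology Set MeasureTheory Classical

noncomputable section

/-! The displacement `g = h - id` is `δ`-Lipschitz when `‖h - id‖₁ < δ`, so the steps
`uₘ = hᵐ⁺¹(x) - hᵐ(x) = g(hᵐ x)` of the orbit satisfy `|uₘ₊₁ - uₘ| ≤ δ |uₘ|`. A discrete Gronwall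
estimate gives `|uₘ - u₀| ≤ ((1 + δ)ᵐ - 1) |u₀|`, and summing the telescoping identity
`hⁿ(x) - x - n u₀ = ∑_{m<n} (uₘ - u₀)` bounds the error by `n ((1 + δ)ⁿ - 1) |u₀|`, which is
`≤ ε |u₀|` for small `δ`. Since each step has length `< δ`, the first `n` iterates stay in a
`nδ`-neighbourhood of `I₂`, which lies in `I₁` for small `δ` by compactness. -/

open Metric

theorem iterate_mem_closedBall_of_dist_le {X : Type*} [PseudoMetricSpace X] {h : X → X} {x : X}
    {δ : ℝ} {n : ℕ} (hδ : 0 ≤ δ) (hh : ∀ y ∈ closedBall x (n * δ), dist (h y) y ≤ δ)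
    {m : ℕ} (hm : m ≤ n) : h^[m] x ∈ closedBall x (m * δ) := by
  induction m with
  | zero => simp
  | succ m ih =>
    have hmem : dist (h^[m] x) x ≤ m * δ := ih (by omega)
    have hstep : dist (h (h^[m] x)) (h^[m] x) ≤ δ :=
      hh _ (closedBall_subset_closedBall (by gcongr; omega) hmem)
    rw [mem_closedBall, Function.iterate_succ_apply']
    calc dist (h (h^[m] x)) x ≤ dist (h (h^[m] x)) (h^[m] x) + dist (h^[m] x) x :=
          dist_triangle _ _ _
      _ ≤ δ + m * δ := add_le_add hstep hmem
      _ = (m + 1 : ℕ) * δ := by push_cast; ring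

theorem Convex.norm_sub_id_sub_le {𝕜 : Type*} [RCLike 𝕜] {h : 𝕜 → 𝕜} {s : Set 𝕜} {δ : ℝ}
    (hs : Convex ℝ s) (hd : ∀ y ∈ s, DifferentiableAt 𝕜 h y) (hδ : ∀ y ∈ s, ‖deriv h y - 1‖ ≤ δ)
    {y z : 𝕜} (hy : y ∈ s) (hz : z ∈ s) : ‖(h y - y) - (h z - z)‖ ≤ δ * ‖y - z‖ :=
  hs.norm_image_sub_le_of_norm_deriv_le (f := fun u => h u - u)
    (fun w hw => (hd w hw).sub differentiableAt_id)
    (fun w hw => by rw [deriv_fun_sub (hd w hw) differentiableAt_fun_id, deriv_id'']; exact hδ w hw)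
    hz hy

section DiscreteGronwall

variable {E : Type*} [SeminormedAddCommGroup E] {δ : ℝ} {n : ℕ}

theorem norm_sub_zero_le_of_norm_succ_sub_le {u : ℕ → E} (hδ : 0 ≤ δ)
    (hu : ∀ m < n, ‖u (m + 1) - u m‖ ≤ δ * ‖u m‖) {m : ℕ} (hm : m ≤ n) :
    ‖u m - u 0‖ ≤ ((1 + δ) ^ m - 1) * ‖u 0‖ := by
  induction m with
  | zero => simp
  | succ m ih =>
    have ih := ih (by omega)
    have hum : ‖u m‖ ≤ (1 + δ) ^ m * ‖u 0‖ := by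
      linarith [norm_le_norm_add_norm_sub' (u m) (u 0)]
    calc ‖u (m + 1) - u 0‖ ≤ ‖u (m + 1) - u m‖ + ‖u m - u 0‖ :=
          norm_sub_le_norm_sub_add_norm_sub _ _ _
      _ ≤ δ * ((1 + δ) ^ m * ‖u 0‖) + ((1 + δ) ^ m - 1) * ‖u 0‖ :=
          add_le_add ((hu m (by omega)).trans (mul_le_mul_of_nonneg_left hum hδ)) ih
      _ = ((1 + δ) ^ (m + 1) - 1) * ‖u 0‖ := by ring

theorem norm_sum_range_sub_zero_le {u : ℕ → E} (hδ : 0 ≤ δ)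
    (hu : ∀ m < n, ‖u (m + 1) - u m‖ ≤ δ * ‖u m‖) :
    ‖∑ m ∈ Finset.range n, (u m - u 0)‖ ≤ n * ((1 + δ) ^ n - 1) * ‖u 0‖ := by
  calc ‖∑ m ∈ Finset.range n, (u m - u 0)‖ ≤ ∑ m ∈ Finset.range n, ‖u m - u 0‖ := norm_sum_le _ _
    _ ≤ ∑ _m ∈ Finset.range n, ((1 + δ) ^ n - 1) * ‖u 0‖ := by
        refine Finset.sum_le_sum fun m hm => ?_
        have hmn : m ≤ n := (Finset.mem_range.mp hm).le
        refine (norm_sub_zero_le_of_norm_succ_sub_le hδ hu hmn).trans ?_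
        gcongr
        linarith
    _ = n * ((1 + δ) ^ n - 1) * ‖u 0‖ := by simp [mul_assoc]

theorem norm_sub_sub_nsmul_le (x : ℕ → E) (hδ : 0 ≤ δ)
    (hx : ∀ m < n, ‖(x (m + 2) - x (m + 1)) - (x (m + 1) - x m)‖ ≤ δ * ‖x (m + 1) - x m‖) :
    ‖x n - x 0 - n • (x 1 - x 0)‖ ≤ n * ((1 + δ) ^ n - 1) * ‖x 1 - x 0‖ := by
  have htelescope : x n - x 0 - n • (x 1 - x 0) =
      ∑ m ∈ Finset.range n, ((x (m + 1) - x m) - (x 1 - x 0)) := by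
    rw [Finset.sum_sub_distrib, Finset.sum_range_sub, Finset.sum_const, Finset.card_range]
  rw [htelescope]
  exact norm_sum_range_sub_zero_le (u := fun m => x (m + 1) - x m) hδ hx

end DiscreteGronwall

theorem eventually_nat_mul_one_add_pow_sub_one_le (n : ℕ) {ε : ℝ} (hε : 0 < ε) :
    ∀ᶠ δ in 𝓝 (0 : ℝ), n * ((1 + δ) ^ n - 1) ≤ ε := by
  have hcont : Continuous fun δ : ℝ => (n : ℝ) * ((1 + δ) ^ n - 1) := by fun_prop
  exact (hcont.tendsto' 0 0 (by simp)).eventually_le_const hε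

theorem iterate_displacement_estimate_general
    (α β c d : ℝ) (hI₂ : Icc c d ⊆ Ioo α β)
    (n : ℕ) (ε : ℝ) (hε : 0 < ε) :
    ∃ δ : ℝ, 0 < δ ∧
      ∀ h : ℝ → ℝ, ContDiffOn ℝ 1 h (Ioo α β) →
        (∀ x ∈ Ioo α β, |h x - x| + |deriv h x - 1| < δ) →
        ∀ x ∈ Ioo c d,
          (∀ m : ℕ, m ≤ n → h^[m] x ∈ Ioo α β) ∧
          |h^[n] x - x - (n : ℝ) * (h x - x)| ≤ ε * |h x - x| := by
  obtain ⟨r, hr, hrI₁⟩ := isCompact_Icc.exists_cthickening_subset_open isOpen_Ioo hI₂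
  have hsmall : ∀ᶠ δ in 𝓝 (0 : ℝ), n * δ ≤ r :=
    ((continuous_const.mul continuous_id).tendsto' 0 0 (by simp)).eventually_le_const hr
  obtain ⟨δ, ⟨hδε, hδr⟩, hδ⟩ := (((eventually_nat_mul_one_add_pow_sub_one_le n hε).and
    hsmall).filter_mono nhdsWithin_le_nhds |>.and self_mem_nhdsWithin).exists (f := 𝓝[>] 0)
  refine ⟨δ, hδ, fun h hC1 hh x hx => ?_⟩
  have hball : closedBall x (n * δ) ⊆ Ioo α β :=
    (closedBall_subset_closedBall hδr).trans
      ((closedBall_subset_cthickening (Ioo_subset_Icc_self hx) r).trans hrI₁)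
  have hmem : ∀ m ≤ n, h^[m] x ∈ Ioo α β := fun m hm =>
    hball <| closedBall_subset_closedBall (by gcongr) <|
      iterate_mem_closedBall_of_dist_le hδ.le (fun y hy => by
        rw [Real.dist_eq]; linarith [hh y (hball hy), abs_nonneg (deriv h y - 1)]) hm
  have hlip : ∀ y ∈ Ioo α β, ∀ z ∈ Ioo α β, ‖(h y - y) - (h z - z)‖ ≤ δ * ‖y - z‖ :=
    fun y hy z hz => (convex_Ioo α β).norm_sub_id_sub_le
      (fun w hw => (hC1.differentiableOn one_ne_zero).differentiableAt (isOpen_Ioo.mem_nhds hw))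
      (fun w hw => by
        rw [Real.norm_eq_abs]; linarith [hh w hw, abs_nonneg (h w - w)]) hy hz
  refine ⟨hmem, ?_⟩
  have hestimate := norm_sub_sub_nsmul_le (fun m => h^[m] x) hδ.le fun m hm => by
    simpa only [Function.iterate_succ_apply'] using hlip _ (hmem (m + 1) hm) _ (hmem m hm.le)
  simp only [Real.norm_eq_abs, nsmul_eq_mul, Function.iterate_zero, id, Function.iterate_one]
    at hestimate
  exact hestimate.trans (mul_le_mul_of_nonneg_right hδε (abs_nonneg _))

/-- (Lemma 3.10 of the paper.) For every `n ≥ 1` and `ε > 0` there is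
`δ > 0` such that any `C¹`-map `h` on `I₁` with `‖h - id‖₁ < δ` has its first `n` iterates
defined on `I₂` and satisfies `|(hⁿ - id)(x) - n (h - id)(x)| ≤ ε |(h - id)(x)|` on `I₂`. -/
theorem iterate_displacement_estimate
    (α β c d : ℝ) (hcd : c < d) (hI₂ : Icc c d ⊆ Ioo α β)
    (n : ℕ) (hn : 1 ≤ n) (ε : ℝ) (hε : 0 < ε) :
    ∃ δ : ℝ, 0 < δ ∧
      ∀ h : ℝ → ℝ, ContDiffOn ℝ 1 h (Ioo α β) →
        (∀ x ∈ Ioo α β, |h x - x| + |deriv h x - 1| < δ) →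
        ∀ x ∈ Ioo c d,
          (∀ m : ℕ, m ≤ n → h^[m] x ∈ Ioo α β) ∧
          |h^[n] x - x - (n : ℝ) * (h x - x)| ≤ ε * |h x - x| :=
  iterate_displacement_estimate_general α β c d hI₂ n ε hε

end
end

section
/- Let I₁ be an open interval in ℝ and let I₂ be an open, relatively compact subinterval of I₁. For every integer n ≥ 1 and all positive reals C₁, C₂ there exists δ > 0 such that for every C¹-map h : I₁ → ℝ with ‖h − id‖_{1,I₁} < δ whose iterates up to order n are defined on I₂, and for arbitrary points x, y ∈ I₂ with |y − x| < C₂·|(hⁿ − id)(x)|, one has |(h − id)(y) − (h − id)(x)| < C₁·|(h − id)(x)|. -/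
open Filter Topology Set MeasureTheory Classical

noncomputable section

/-!
Write `g = h - id`. Its derivative `h' - 1` is at most `δ` in absolute value, so `g` is
`δ`-Lipschitz. Along the orbit of `x`, each step of `h` moves a point by its displacement, which
differs from `g x` by at most the distance already travelled; with `δ ≤ 1` this gives
`|hⁿ x - x| ≤ (2ⁿ - 1) |g x|`. Hence `|g y - g x| ≤ δ |y - x| < δ C₂ 2ⁿ |g x|`, which is at most
`C₁ |g x|` once `δ ≤ C₁ / (C₂ 2ⁿ)`.
-/

theorem abs_sub_id_sub_sub_id_le {s : Set ℝ} (hs : Convex ℝ s) (hso : IsOpen s) {h : ℝ → ℝ}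
    (hd : DifferentiableOn ℝ h s) {L : ℝ} (hL : ∀ z ∈ s, |deriv h z - 1| ≤ L)
    {x y : ℝ} (hx : x ∈ s) (hy : y ∈ s) :
    |(h y - y) - (h x - x)| ≤ L * |y - x| := by
  have hderiv : ∀ z ∈ s, HasDerivWithinAt (fun t => h t - t) (deriv h z - 1) s z := fun z hz =>
    (((hd z hz).differentiableAt (hso.mem_nhds hz)).hasDerivAt.sub (hasDerivAt_id z)).hasDerivWithinAt
  simpa only [Real.norm_eq_abs] using
    hs.norm_image_sub_le_of_norm_hasDerivWithin_le hderiv hL hx hy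

theorem abs_iterate_sub_le {h : ℝ → ℝ} {x : ℝ} {k : ℕ}
    (hdisp : ∀ m < k, |(h (h^[m] x) - h^[m] x) - (h x - x)| ≤ |h^[m] x - x|) :
    |h^[k] x - x| ≤ (2 ^ k - 1) * |h x - x| := by
  induction k with
  | zero => simp
  | succ k ih =>
    have hprev := ih fun m hm => hdisp m (Nat.lt_succ_of_lt hm)
    have hstep : |h (h^[k] x) - h^[k] x| ≤ |h x - x| + |h^[k] x - x| := by
      have := abs_sub_abs_le_abs_sub (h (h^[k] x) - h^[k] x) (h x - x)
      linarith [hdisp k k.lt_succ_self]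
    calc |h^[k + 1] x - x| = |(h (h^[k] x) - h^[k] x) + (h^[k] x - x)| := by
          rw [Function.iterate_succ_apply']; ring_nf
      _ ≤ |h (h^[k] x) - h^[k] x| + |h^[k] x - x| := abs_add_le _ _
      _ ≤ (2 ^ (k + 1) - 1) * |h x - x| := by rw [pow_succ]; linarith

theorem displacement_comparison_general
    (α β c d : ℝ) (hI₂ : Icc c d ⊆ Ioo α β)
    (n : ℕ) (C₁ C₂ : ℝ) (hC₁ : 0 < C₁) (hC₂ : 0 < C₂) :
    ∃ δ : ℝ, 0 < δ ∧
      ∀ h : ℝ → ℝ, ContDiffOn ℝ 1 h (Ioo α β) →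
        (∀ x ∈ Ioo α β, |h x - x| + |deriv h x - 1| < δ) →
        (∀ x ∈ Ioo c d, ∀ m : ℕ, m ≤ n → h^[m] x ∈ Ioo α β) →
        ∀ x ∈ Ioo c d, ∀ y ∈ Ioo c d, |y - x| < C₂ * |h^[n] x - x| →
          |(h y - y) - (h x - x)| < C₁ * |h x - x| := by
  set δ := min 1 (C₁ / (C₂ * 2 ^ n))
  have hδ : 0 < δ := lt_min one_pos (by positivity)
  have hδC : δ * (C₂ * 2 ^ n) ≤ C₁ :=
    (le_div_iff₀ (by positivity)).mp (min_le_right _ _)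
  refine ⟨δ, hδ, fun h hC1 hclose hiter x hx y hy hxy => ?_⟩
  have hsub : Ioo c d ⊆ Ioo α β := Ioo_subset_Icc_self.trans hI₂
  have hlip : ∀ z ∈ Ioo α β, ∀ w ∈ Ioo α β, |(h w - w) - (h z - z)| ≤ δ * |w - z| :=
    fun z hz w hw => abs_sub_id_sub_sub_id_le (convex_Ioo α β) isOpen_Ioo
      (hC1.differentiableOn one_ne_zero)
      (fun t ht => by linarith [hclose t ht, abs_nonneg (h t - t)]) hz hw
  have horbit : |h^[n] x - x| ≤ (2 ^ n - 1) * |h x - x| := abs_iterate_sub_le fun m hm =>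
    (hlip x (hsub hx) _ (hiter x hx m hm.le)).trans
      (mul_le_of_le_one_left (abs_nonneg _) (min_le_left _ _))
  calc |(h y - y) - (h x - x)| ≤ δ * |y - x| := hlip x (hsub hx) y (hsub hy)
    _ < δ * (C₂ * ((2 ^ n - 1) * |h x - x|)) := by gcongr; exact hxy.trans_le (by gcongr)
    _ ≤ δ * (C₂ * 2 ^ n) * |h x - x| := by
      linarith [mul_nonneg (mul_nonneg hδ.le hC₂.le) (abs_nonneg (h x - x))]
    _ ≤ C₁ * |h x - x| := by gcongr

/-- (Lemma 3.11 of the paper.) For every `n ≥ 1` and positive `C₁, C₂`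
there is `δ > 0` such that for any `C¹`-map `h` on `I₁` with `‖h - id‖₁ < δ` whose iterates
up to order `n` are defined on `I₂`, and any `x, y ∈ I₂` with `|y - x| < C₂ |(hⁿ - id)(x)|`,
one has `|(h - id)(y) - (h - id)(x)| < C₁ |(h - id)(x)|`. -/
theorem displacement_comparison
    (α β c d : ℝ) (hcd : c < d) (hI₂ : Icc c d ⊆ Ioo α β)
    (n : ℕ) (hn : 1 ≤ n) (C₁ C₂ : ℝ) (hC₁ : 0 < C₁) (hC₂ : 0 < C₂) :
    ∃ δ : ℝ, 0 < δ ∧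
      ∀ h : ℝ → ℝ, ContDiffOn ℝ 1 h (Ioo α β) →
        (∀ x ∈ Ioo α β, |h x - x| + |deriv h x - 1| < δ) →
        (∀ x ∈ Ioo c d, ∀ m : ℕ, m ≤ n → h^[m] x ∈ Ioo α β) →
        ∀ x ∈ Ioo c d, ∀ y ∈ Ioo c d, |y - x| < C₂ * |h^[n] x - x| →
          |(h y - y) - (h x - x)| < C₁ * |h x - x| :=
  displacement_comparison_general α β c d hI₂ n C₁ C₂ hC₁ hC₂
end
end

section
/- Let 0 < λ < 1 and let I₁ be an open interval in ℝ containing [−1, 1]. For every integer n ≥ 1 there exists a positive real number δ(n) > 0 with (n+1)·δ(n) < 1 − λ such that for every C¹-map h : I₁ → ℝ with ‖h − id‖_{1,I₁} < δ(n) and h(0) > 0, there exists an integer k ≥ 1 satisfying: (1) (n+1)·|(h − id)(λᵏ)| > λᵏ(1 − λ); (2) n·|(h − id)(λᵏ)| < λ^{k−1}(1 − λ); (3) |(h − id)(y) − (h − id)(λᵏ)| < (1/4)·|(h − id)(λᵏ)| for every point y ∈ I₁ with |y − λᵏ| < λ^{k−1}(1 − λ). -/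
open Filter Topology Set MeasureTheory Classical

noncomputable section

/-!
Write `g = h - id`. The `C¹` bound makes `g` a `δ`-Lipschitz function with `|g| < δ`, and
`g(λᵏ) → g(0) > 0` while `λᵏ(1-λ) → 0`. So there is a first scale `k` at which
`(n+1)|g(λᵏ)| > λᵏ(1-λ)`, and `k ≥ 1` because `|g(1)| < δ` is small. Minimality of `k`
together with `|g(λᵏ) - g(λ^{k-1})| ≤ δ λ^{k-1}(1-λ)` gives the upper bound (2), and the
Lipschitz bound on the `λ^{k-1}(1-λ)`-neighbourhood of `λᵏ`, compared with the lower
bound (1), gives (3). All three estimates hold for `δ = λ(1-λ)/(4(n+1)²)`.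
-/

theorem abs_sub_sub_sub_le_of_abs_deriv_sub_one_le {h : ℝ → ℝ} {s : Set ℝ} {δ : ℝ}
    (hs : Convex ℝ s) (hd : ∀ x ∈ s, DifferentiableAt ℝ h x)
    (hδ : ∀ x ∈ s, |deriv h x - 1| ≤ δ) {x y : ℝ} (hx : x ∈ s) (hy : y ∈ s) :
    |(h y - y) - (h x - x)| ≤ δ * |y - x| := by
  have hg : ∀ z ∈ s, DifferentiableAt ℝ (fun z => h z - z) z := fun z hz =>
    (hd z hz).sub differentiableAt_id
  have hg' : ∀ z ∈ s, ‖deriv (fun z => h z - z) z‖ ≤ δ := fun z hz => by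
    rw [deriv_fun_sub (hd z hz) differentiableAt_fun_id, deriv_id'', Real.norm_eq_abs]
    exact hδ z hz
  simpa only [Real.norm_eq_abs] using hs.norm_image_sub_le_of_norm_deriv_le hg hg' hx hy

theorem exists_abs_le_and_lt_abs_succ {g : ℝ → ℝ} {lam c : ℝ} (hlam0 : 0 ≤ lam)
    (hlam1 : lam < 1) (hc : 0 < c) (hg : ContinuousAt g 0) (hg0 : g 0 ≠ 0)
    (hg1 : c * |g 1| ≤ 1 - lam) :
    ∃ m : ℕ, c * |g (lam ^ m)| ≤ lam ^ m * (1 - lam) ∧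
      lam ^ (m + 1) * (1 - lam) < c * |g (lam ^ (m + 1))| := by
  have hpow : Tendsto (fun k : ℕ => lam ^ k) atTop (𝓝 0) :=
    tendsto_pow_atTop_nhds_zero_of_lt_one hlam0 hlam1
  have hlim : Tendsto (fun k : ℕ => c * |g (lam ^ k)| - lam ^ k * (1 - lam)) atTop
      (𝓝 (c * |g 0| - 0 * (1 - lam))) :=
    (tendsto_const_nhds.mul (hg.tendsto.comp hpow).abs).sub (hpow.mul tendsto_const_nhds)
  have hpos : 0 < c * |g 0| - 0 * (1 - lam) := by
    rw [zero_mul, sub_zero]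
    exact mul_pos hc (abs_pos.mpr hg0)
  obtain ⟨k, hk⟩ := (hlim.eventually (eventually_gt_nhds hpos)).exists
  obtain ⟨m, hm, hm1⟩ := Nat.exists_not_and_succ_of_not_zero_of_exists
    (p := fun k => lam ^ k * (1 - lam) < c * |g (lam ^ k)|)
    (by simpa using hg1) ⟨k, by linarith⟩
  exact ⟨m, not_lt.mp hm, hm1⟩

theorem nat_mul_abs_lt_of_abs_sub_le {a b δ L : ℝ} {n : ℕ} (hL : 0 < L)
    (hδ : n * (n + 1) * δ < 1) (ha : (n + 1) * |a| ≤ L) (hab : |b - a| ≤ δ * L) :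
    n * |b| < L := by
  have hb : |b| ≤ |a| + δ * L := by
    linarith [abs_sub_abs_le_abs_sub b a]
  have hn : (0 : ℝ) ≤ n := n.cast_nonneg
  have hmul : (n + 1) * (n * |b|) < (n + 1) * L := by
    nlinarith [mul_le_mul_of_nonneg_left hb (mul_nonneg hn (by linarith : (0 : ℝ) ≤ n + 1)),
      mul_lt_mul_of_pos_right hδ hL]
  exact lt_of_mul_lt_mul_left hmul (by linarith)

theorem lt_quarter_abs_of_lt_mul {d b c δ L lam : ℝ} (hc : 0 < c) (hL : 0 ≤ L)
    (hδ : 4 * c * δ ≤ lam) (hd : d < δ * L) (hb : lam * L < c * |b|) :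
    d < 1 / 4 * |b| := by
  nlinarith [mul_le_mul_of_nonneg_right hδ hL]

theorem exists_pos_scale_constant {lam : ℝ} (hlam0 : 0 < lam) (hlam1 : lam < 1) (n : ℕ) :
    ∃ δ : ℝ, 0 < δ ∧ ((n : ℝ) + 1) * δ < 1 - lam ∧ (n : ℝ) * (n + 1) * δ < 1 ∧
      4 * ((n : ℝ) + 1) * δ ≤ lam := by
  have hlam1' : 0 < 1 - lam := by linarith
  have hn1 : (0 : ℝ) < n + 1 := by positivity
  set δ := lam * (1 - lam) / (4 * ((n : ℝ) + 1) ^ 2) with hδ_def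
  have hδ0 : 0 < δ := by positivity
  have hδ : 4 * ((n : ℝ) + 1) * ((n + 1) * δ) = lam * (1 - lam) := by
    rw [hδ_def]; field_simp
  clear_value δ
  exact ⟨δ, hδ0, by nlinarith, by nlinarith, by nlinarith⟩

theorem exists_good_scale_general
    (lam : ℝ) (hlam0 : 0 < lam) (hlam1 : lam < 1)
    (α β : ℝ) (hI : Icc (-1 : ℝ) 1 ⊆ Ioo α β)
    (n : ℕ) :
    ∃ δ : ℝ, 0 < δ ∧ ((n : ℝ) + 1) * δ < 1 - lam ∧
      ∀ h : ℝ → ℝ, ContDiffOn ℝ 1 h (Ioo α β) →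
        (∀ x ∈ Ioo α β, |h x - x| + |deriv h x - 1| < δ) →
        0 < h 0 →
        ∃ k : ℕ, 1 ≤ k ∧
          ((n : ℝ) + 1) * |h (lam ^ k) - lam ^ k| > lam ^ k * (1 - lam) ∧
          (n : ℝ) * |h (lam ^ k) - lam ^ k| < lam ^ (k - 1) * (1 - lam) ∧
          ∀ y ∈ Ioo α β, |y - lam ^ k| < lam ^ (k - 1) * (1 - lam) →
            |(h y - y) - (h (lam ^ k) - lam ^ k)| <
              (1 / 4) * |h (lam ^ k) - lam ^ k| := by
  have hn1 : (0 : ℝ) < n + 1 := by positivity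
  obtain ⟨δ, hδ0, hδ_small, hδ_upper, hδ_flat⟩ := exists_pos_scale_constant hlam0 hlam1 n
  refine ⟨δ, hδ0, hδ_small, fun h hC hsm h0 => ?_⟩
  have hmem : ∀ k : ℕ, lam ^ k ∈ Ioo α β := fun k =>
    hI ⟨by linarith [pow_pos hlam0 k], pow_le_one₀ hlam0.le hlam1.le⟩
  have hd : ∀ x ∈ Ioo α β, DifferentiableAt ℝ h x := fun x hx =>
    (hC.differentiableOn one_ne_zero).differentiableAt (isOpen_Ioo.mem_nhds hx)
  have hlip : ∀ x ∈ Ioo α β, ∀ y ∈ Ioo α β, |(h y - y) - (h x - x)| ≤ δ * |y - x| :=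
    fun x hx y hy => abs_sub_sub_sub_le_of_abs_deriv_sub_one_le (convex_Ioo α β) hd
      (fun z hz => by linarith [hsm z hz, abs_nonneg (h z - z)]) hx hy
  have h1 : ((n : ℝ) + 1) * |h 1 - 1| ≤ 1 - lam := by
    nlinarith [hsm 1 (hmem 0), abs_nonneg (deriv h 1 - 1), pow_zero lam]
  obtain ⟨m, hm, hm1⟩ := exists_abs_le_and_lt_abs_succ (g := fun x => h x - x) hlam0.le hlam1
    hn1 ((hd 0 (hI ⟨by norm_num, by norm_num⟩)).continuousAt.sub continuousAt_id)
    (by simpa using h0.ne') h1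
  have hL : 0 < lam ^ m * (1 - lam) := by positivity
  have hstep : |lam ^ (m + 1) - lam ^ m| = lam ^ m * (1 - lam) := by
    rw [abs_sub_comm, abs_of_nonneg (by nlinarith [pow_pos hlam0 m, pow_succ lam m])]
    ring
  refine ⟨m + 1, le_add_self, hm1, ?_, fun y hy hyk => ?_⟩
  · rw [Nat.add_sub_cancel]
    refine nat_mul_abs_lt_of_abs_sub_le hL hδ_upper hm ?_
    simpa only [hstep] using hlip _ (hmem m) _ (hmem (m + 1))
  · rw [Nat.add_sub_cancel] at hyk
    refine lt_quarter_abs_of_lt_mul hn1 hL.le hδ_flat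
      ((hlip _ (hmem (m + 1)) y hy).trans_lt (mul_lt_mul_of_pos_left hyk hδ0)) ?_
    calc lam * (lam ^ m * (1 - lam)) = lam ^ (m + 1) * (1 - lam) := by ring
      _ < _ := hm1

/-- (Lemma 3.12 of the paper.) For every `n ≥ 1` there is `δ(n) > 0` with
`(n+1) δ(n) < 1 - λ` such that every `C¹`-map `h` on `I₁ ⊇ [-1,1]` with `‖h - id‖₁ < δ(n)` and
`h(0) > 0` admits `k ≥ 1` with the displacement of `h` at `λᵏ` comparable to `λᵏ(1-λ)` and
almost constant on the `λ^{k-1}(1-λ)`-neighborhood of `λᵏ`. -/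
theorem exists_good_scale
    (lam : ℝ) (hlam0 : 0 < lam) (hlam1 : lam < 1)
    (α β : ℝ) (hI : Icc (-1 : ℝ) 1 ⊆ Ioo α β)
    (n : ℕ) (hn : 1 ≤ n) :
    ∃ δ : ℝ, 0 < δ ∧ ((n : ℝ) + 1) * δ < 1 - lam ∧
      ∀ h : ℝ → ℝ, ContDiffOn ℝ 1 h (Ioo α β) →
        (∀ x ∈ Ioo α β, |h x - x| + |deriv h x - 1| < δ) →
        0 < h 0 →
        ∃ k : ℕ, 1 ≤ k ∧
          ((n : ℝ) + 1) * |h (lam ^ k) - lam ^ k| > lam ^ k * (1 - lam) ∧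
          (n : ℝ) * |h (lam ^ k) - lam ^ k| < lam ^ (k - 1) * (1 - lam) ∧
          ∀ y ∈ Ioo α β, |y - lam ^ k| < lam ^ (k - 1) * (1 - lam) →
            |(h y - y) - (h (lam ^ k) - lam ^ k)| <
              (1 / 4) * |h (lam ^ k) - lam ^ k| :=
  exists_good_scale_general lam hlam0 hlam1 α β hI n

end
end

section
/- Let 0 < λ < 1, let I₁ be an open interval in ℝ containing [−1, 1], let n ≥ 1 be an integer and let δ > 0 satisfy (n+1)·δ < 1 − λ. Let h : I₁ → ℝ be a C¹-map with ‖h − id‖_{1,I₁} < δ and h(0) > 0, and let k ≥ 1 be an integer such that: (n+1)·|(h − id)(λᵏ)| > λᵏ(1 − λ); n·|(h − id)(λᵏ)| < λ^{k−1}(1 − λ); and |(h − id)(y) − (h − id)(λᵏ)| < (1/4)·|(h − id)(λᵏ)| for every y ∈ I₁ with |y − λᵏ| < λ^{k−1}(1 − λ). Set λ′ = max{0, 2λ − 1}, I = [λ′, λ], and define g(x) = λ^{−k+1}·h(λ^{k−1} x) for x ∈ I. Then for every x ∈ I: (3/8)·λ(1 − λ) ≤ n·|(g − id)(x)| ≤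 (5/4)·(1 − λ), and n·|(g − id)′(x)| < 1 − λ. -/
open Filter Topology Set MeasureTheory Classical

noncomputable section

/-! The rescaled point `y = λ^{k-1} x` of `x ∈ I` lies within `λ^{k-1}(1-λ)` of `λ^k`, so
by (18), extended to the boundary of that ball by continuity, `(h - id)(y)` is within a quarter
of `c = (h - id)(λ^k)`. Since `(g - id)(x) = λ^{-(k-1)} (h - id)(y)`, the bounds (16) and (17) on
`|c|` give the two-sided estimate (using `n / (n + 1) ≥ 1/2`), while `(g - id)'(x) = h'(y) - 1`
has modulus below `δ`. -/

theorem ContinuousAt.le_of_forall_dist_lt {E α : Type*} [NormedAddCommGroup E] [NormedSpace ℝ E]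
    [TopologicalSpace α] [Preorder α] [OrderClosedTopology α]
    {f : E → α} {U : Set E} {a y : E} {r : ℝ} {C : α}
    (hf : ContinuousAt f y) (hU : IsOpen U) (hyU : y ∈ U) (hr : r ≠ 0) (hy : dist y a ≤ r)
    (hbound : ∀ z ∈ U, dist z a < r → f z ≤ C) : f y ≤ C := by
  have hclosure : y ∈ closure (U ∩ Metric.ball a r) :=
    hU.inter_closure ⟨hyU, by rwa [closure_ball a hr]⟩
  exact hf.continuousWithinAt.closure_le hclosure continuousWithinAt_const
    fun z ⟨hzU, hz⟩ => hbound z hzU hz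

theorem hasDerivAt_inv_mul_comp_mul_sub_id {h : ℝ → ℝ} {μ d x : ℝ} (hμ : μ ≠ 0)
    (hh : HasDerivAt h d (μ * x)) :
    HasDerivAt (fun y => μ⁻¹ * h (μ * y) - y) (d - 1) x := by
  have hcomp : HasDerivAt (fun y => h (μ * y)) (d * μ) x :=
    hh.comp x (by simpa using (hasDerivAt_id x).const_mul μ)
  have := (hcomp.const_mul μ⁻¹).sub (hasDerivAt_id x)
  rwa [mul_comm d, ← mul_assoc, inv_mul_cancel₀ hμ, one_mul] at this

theorem abs_inv_mul_comp_mul_sub_id (h : ℝ → ℝ) {μ : ℝ} (hμ : 0 < μ) (x : ℝ) :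
    |μ⁻¹ * h (μ * x) - x| = μ⁻¹ * |h (μ * x) - μ * x| := by
  rw [← abs_of_pos (inv_pos.mpr hμ), ← abs_mul, abs_of_pos (inv_pos.mpr hμ), mul_sub,
    inv_mul_cancel_left₀ hμ.ne']

theorem abs_sub_le_one_sub_of_mem_Icc {lam x : ℝ} (hx : x ∈ Icc (max 0 (2 * lam - 1)) lam) :
    |x - lam| ≤ 1 - lam := by
  rw [abs_sub_comm, abs_of_nonneg (sub_nonneg.mpr hx.2)]
  linarith [le_max_right 0 (2 * lam - 1), hx.1]

theorem inv_mul_abs_bounds_of_abs_sub_le {n : ℕ} (hn : 1 ≤ n) {μ a b c D : ℝ} (hμ : 0 < μ)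
    (hlow : μ * b < ((n : ℝ) + 1) * |c|) (hup : (n : ℝ) * |c| < μ * a)
    (hD : |D - c| ≤ (1 / 4) * |c|) :
    (3 / 8) * b ≤ (n : ℝ) * (μ⁻¹ * |D|) ∧
      (n : ℝ) * (μ⁻¹ * |D|) ≤ (5 / 4) * a := by
  have hn1 : (1 : ℝ) ≤ n := by exact_mod_cast hn
  have hDlow : (3 / 4) * |c| ≤ |D| := by
    linarith [abs_sub_abs_le_abs_sub c D, abs_sub_comm c D]
  have hDup : |D| ≤ (5 / 4) * |c| := by linarith [abs_sub_abs_le_abs_sub D c]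
  rw [← mul_assoc, mul_comm _ μ⁻¹, mul_assoc, le_inv_mul_iff₀ hμ, inv_mul_le_iff₀ hμ]
  constructor
  · -- `2 n ≥ n + 1`, so `n |D| ≥ (3/4) n |c| ≥ (3/8) (n + 1) |c|`
    nlinarith [mul_le_mul_of_nonneg_left hDlow (by linarith : (0 : ℝ) ≤ n), abs_nonneg c]
  · nlinarith [mul_le_mul_of_nonneg_left hDup (by linarith : (0 : ℝ) ≤ n)]

theorem conjugate_displacement_bounds_general
    (lam : ℝ) (hlam0 : 0 < lam) (hlam1 : lam < 1)
    (α β : ℝ) (hI : Icc (-1 : ℝ) 1 ⊆ Ioo α β)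
    (n : ℕ) (hn : 1 ≤ n) (δ : ℝ) (hδ' : ((n : ℝ) + 1) * δ < 1 - lam)
    (h : ℝ → ℝ) (hC1 : ContDiffOn ℝ 1 h (Ioo α β))
    (hnorm : ∀ x ∈ Ioo α β, |h x - x| + |deriv h x - 1| < δ)
    (k : ℕ) (hk : 1 ≤ k)
    (h16 : ((n : ℝ) + 1) * |h (lam ^ k) - lam ^ k| > lam ^ k * (1 - lam))
    (h17 : (n : ℝ) * |h (lam ^ k) - lam ^ k| < lam ^ (k - 1) * (1 - lam))
    (h18 : ∀ y ∈ Ioo α β, |y - lam ^ k| < lam ^ (k - 1) * (1 - lam) →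
      |(h y - y) - (h (lam ^ k) - lam ^ k)| < (1 / 4) * |h (lam ^ k) - lam ^ k|) :
    ∀ x ∈ Icc (max 0 (2 * lam - 1)) lam,
      (3 / 8) * (lam * (1 - lam)) ≤
          (n : ℝ) * |(lam ^ (k - 1))⁻¹ * h (lam ^ (k - 1) * x) - x| ∧
      (n : ℝ) * |(lam ^ (k - 1))⁻¹ * h (lam ^ (k - 1) * x) - x| ≤ (5 / 4) * (1 - lam) ∧
      (n : ℝ) * |deriv (fun y => (lam ^ (k - 1))⁻¹ * h (lam ^ (k - 1) * y) - y) x|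
        < 1 - lam := by
  intro x hx
  set μ := lam ^ (k - 1)
  have hμ : 0 < μ := pow_pos hlam0 _
  have hlk : lam ^ k = μ * lam := by rw [mul_comm, mul_pow_sub_one (by omega)]
  have hy : μ * x ∈ Ioo α β := by
    refine hI (Icc_subset_Icc (by norm_num) le_rfl (unitInterval.mul_mem ?_ ?_))
    · exact ⟨hμ.le, pow_le_one₀ hlam0.le hlam1.le⟩
    · exact ⟨(le_max_left _ _).trans hx.1, hx.2.trans hlam1.le⟩
  have hdist : dist (μ * x) (lam ^ k) ≤ μ * (1 - lam) := by
    rw [Real.dist_eq, hlk, ← mul_sub, abs_mul, abs_of_pos hμ]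
    exact mul_le_mul_of_nonneg_left (abs_sub_le_one_sub_of_mem_Icc hx) hμ.le
  have hhy : ContinuousAt h (μ * x) := hC1.continuousOn.continuousAt (isOpen_Ioo.mem_nhds hy)
  have hD : |(h (μ * x) - μ * x) - (h (lam ^ k) - lam ^ k)| ≤
      (1 / 4) * |h (lam ^ k) - lam ^ k| :=
    ContinuousAt.le_of_forall_dist_lt (f := fun z => |(h z - z) - (h (lam ^ k) - lam ^ k)|)
      (by fun_prop) isOpen_Ioo hy (mul_pos hμ (sub_pos.mpr hlam1)).ne' hdist
      fun z hz hzd => (h18 z hz (by rwa [← Real.dist_eq])).le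
  have hderiv := hasDerivAt_inv_mul_comp_mul_sub_id hμ.ne'
    ((hC1.differentiableOn one_ne_zero).differentiableAt (isOpen_Ioo.mem_nhds hy)).hasDerivAt
  have hh' : |deriv h (μ * x) - 1| < δ := by
    linarith [hnorm _ hy, abs_nonneg (h (μ * x) - μ * x)]
  obtain ⟨hlow, hup⟩ :=
    inv_mul_abs_bounds_of_abs_sub_le hn hμ (by rw [← mul_assoc, ← hlk]; exact h16) h17 hD
  rw [abs_inv_mul_comp_mul_sub_id h hμ, hderiv.deriv]
  refine ⟨hlow, hup, ?_⟩
  calc (n : ℝ) * |deriv h (μ * x) - 1| ≤ n * δ := by gcongr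
    _ < 1 - lam := by linarith [abs_nonneg (deriv h (μ * x) - 1)]

/-- (Lemma 3.13 of the paper.) Under the conclusions of Lemma 3.12 for
`h` and the scale `k`, the conjugate `g(x) = λ^{-k+1} h(λ^{k-1} x)` satisfies
`(3/8) λ(1-λ) ≤ n |(g - id)(x)| ≤ (5/4)(1-λ)` and `n |(g - id)'(x)| < 1 - λ` on
`I = [max{0, 2λ-1}, λ]`. -/
theorem conjugate_displacement_bounds
    (lam : ℝ) (hlam0 : 0 < lam) (hlam1 : lam < 1)
    (α β : ℝ) (hI : Icc (-1 : ℝ) 1 ⊆ Ioo α β)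
    (n : ℕ) (hn : 1 ≤ n) (δ : ℝ) (hδ : 0 < δ) (hδ' : ((n : ℝ) + 1) * δ < 1 - lam)
    (h : ℝ → ℝ) (hC1 : ContDiffOn ℝ 1 h (Ioo α β))
    (hnorm : ∀ x ∈ Ioo α β, |h x - x| + |deriv h x - 1| < δ)
    (hpos : 0 < h 0)
    (k : ℕ) (hk : 1 ≤ k)
    (h16 : ((n : ℝ) + 1) * |h (lam ^ k) - lam ^ k| > lam ^ k * (1 - lam))
    (h17 : (n : ℝ) * |h (lam ^ k) - lam ^ k| < lam ^ (k - 1) * (1 - lam))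
    (h18 : ∀ y ∈ Ioo α β, |y - lam ^ k| < lam ^ (k - 1) * (1 - lam) →
      |(h y - y) - (h (lam ^ k) - lam ^ k)| < (1 / 4) * |h (lam ^ k) - lam ^ k|) :
    ∀ x ∈ Icc (max 0 (2 * lam - 1)) lam,
      (3 / 8) * (lam * (1 - lam)) ≤
          (n : ℝ) * |(lam ^ (k - 1))⁻¹ * h (lam ^ (k - 1) * x) - x| ∧
      (n : ℝ) * |(lam ^ (k - 1))⁻¹ * h (lam ^ (k - 1) * x) - x| ≤ (5 / 4) * (1 - lam) ∧
      (n : ℝ) * |deriv (fun y => (lam ^ (k - 1))⁻¹ * h (lam ^ (k - 1) * y) - y) x|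
        < 1 - lam :=
  conjugate_displacement_bounds_general lam hlam0 hlam1 α β hI n hn δ hδ' h hC1 hnorm k hk h16 h17
    h18
end
end
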